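/- Let q be an odd prime power, ξ a nonsquare in F_q, a ∈ F_{q^3}* with N_{q^3/q}(a) ∉ {-1,1}, and r ∈ {1,2}. For every x, y ∈ F_{q^3}, the vector (x, y, -a^{q^r+1}·y, -ξ·a^{q^r+1}·x) + (a^{q^{3-r}}·x^{q^r}, a^{q^{3-r}}·y^{q^r}, y^{q^r}, ξ·x^{q^r}) equals (z, w, A_{a,r}(w), ξ·A_{a,r}(z)) where z = x + a^{q^{3-r}}·x^{q^r} and w = y + a^{q^{3-r}}·y^{q^r}, and the map x ↦ x + a^{q^{3-r}}·x^{q^r} is a bijection of F_{q^3}. Consequently the linear set L_{D_A} = {⟨(z,w,A_{a,r}(w), ξ·A_{a,r}(z))⟩ : (z,w) ≠ (0,0)} equals the set of points ⟨u + f(u)⟩ as u ranges over nonzero vectors of the plane underlying t_1. -/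

import Mathlib

/-!
For `r ∈ {1, 2}`, `τ x = x ^ q ^ r` is a ring automorphism of `K` with `τ³ = id`,
so `x ^ q ^ (3 - r) = τ (τ x)`. Expanding `A (x + τ (τ a) * τ x)`, the two `τ (τ x)` terms
cancel and `τ x - a * τ a * x` is left. If `x ≠ 0` and `x + b * τ x = 0`, applying the
multiplicative norm `N u = u * τ u * τ (τ u)` to `b * τ x = -x` gives `N b = -1`; since
`N (τ (τ a)) = N a`, the additive map `x ↦ x + τ (τ a) * τ x` is injective, hence bijective,
and it carries one parametrisation of the linear set onto the other.
-/

theorem exists_ringHom_eq_pow_pow_of_card_eq_pow {K : Type*} [Field K] [Fintype K] {q n : ℕ}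
    (hcard : Fintype.card K = q ^ n) (hn : n ≠ 0) (s : ℕ) :
    ∃ τ : K →+* K, ∀ x, τ x = x ^ q ^ s := by
  obtain ⟨m, hp, hm⟩ := FiniteField.card K (ringChar K)
  obtain ⟨k, -, rfl⟩ := (Nat.dvd_prime_pow hp).mp (hm ▸ hcard ▸ dvd_pow_self q hn)
  have := Fact.mk hp
  exact ⟨iterateFrobenius K (ringChar K) (k * s), fun x => by
    rw [iterateFrobenius_def, pow_mul]⟩

section CubicAutomorphism

variable {R : Type*} [CommRing R] (τ : R →+* R)

def cubicNorm (u : R) : R := u * τ u * τ (τ u)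

variable {τ}

theorem cubicNorm_mul (u v : R) : cubicNorm τ (u * v) = cubicNorm τ u * cubicNorm τ v := by
  simp only [cubicNorm, map_mul]
  ring

theorem cubicNorm_neg (u : R) : cubicNorm τ (-u) = -cubicNorm τ u := by
  simp only [cubicNorm, map_neg]
  ring

theorem cubicNorm_apply (hτ : ∀ x, τ (τ (τ x)) = x) (u : R) :
    cubicNorm τ (τ u) = cubicNorm τ u := by
  simp only [cubicNorm, hτ]
  ring

theorem apply_add_mul_apply_sub_mul (hτ : ∀ x, τ (τ (τ x)) = x) (a x : R) :
    τ (x + τ (τ a) * τ x) - a * τ (τ (x + τ (τ a) * τ x)) = τ x - a * τ a * x := by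
  simp only [map_add, map_mul, hτ]
  ring

end CubicAutomorphism

section Field

variable {K : Type*} [Field K] {τ : K →+* K}

theorem eq_zero_of_add_mul_apply_eq_zero (hτ : ∀ x, τ (τ (τ x)) = x) {b x : K}
    (hb : cubicNorm τ b ≠ -1) (h : x + b * τ x = 0) : x = 0 := by
  by_contra hx
  have hNx : cubicNorm τ x ≠ 0 := by simp [cubicNorm, hx]
  have hN : cubicNorm τ b * cubicNorm τ x = -1 * cubicNorm τ x := by
    rw [neg_one_mul, ← cubicNorm_neg, ← eq_neg_of_add_eq_zero_right h, cubicNorm_mul,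
      cubicNorm_apply hτ]
  exact hb (mul_right_cancel₀ hNx hN)

theorem injective_add_mul_apply (hτ : ∀ x, τ (τ (τ x)) = x) {b : K}
    (hb : cubicNorm τ b ≠ -1) :
    Function.Injective fun x => x + b * τ x := by
  intro x y h
  rw [← sub_eq_zero]
  refine eq_zero_of_add_mul_apply_eq_zero hτ hb ?_
  rw [map_sub]
  linear_combination h

end Field

theorem setOf_exists_ne_zero_comp_bijective {α β : Type*} [Zero α] {g : α → α}
    (hg : Function.Bijective g) (hg0 : g 0 = 0) (P : α → α → β) :
    {S | ∃ z w, ¬(z = 0 ∧ w = 0) ∧ S = P z w} =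
      {S | ∃ x y, ¬(x = 0 ∧ y = 0) ∧ S = P (g x) (g y)} := by
  ext S
  rw [Set.mem_ofPred_eq, Set.mem_ofPred_eq, hg.surjective.exists₂]
  simp only [hg.injective.eq_iff' hg0]

theorem exists_ringHom_pow_pow_of_card_eq_pow_three {K : Type*} [Field K] [Fintype K] {q r : ℕ}
    (hcard : Fintype.card K = q ^ 3) (hr : r = 1 ∨ r = 2) :
    ∃ τ : K →+* K, (∀ x, τ x = x ^ q ^ r) ∧ (∀ x, τ (τ x) = x ^ q ^ (3 - r)) ∧
      (∀ x, τ (τ (τ x)) = x) ∧ ∀ x, cubicNorm τ x = x ^ (1 + q + q ^ 2) := by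
  obtain ⟨τ, hτ⟩ := exists_ringHom_eq_pow_pow_of_card_eq_pow hcard three_ne_zero r
  have hτ2 : ∀ x, τ (τ x) = x ^ q ^ (3 - r) := by
    intro x
    rcases hr with rfl | rfl
    · rw [hτ, hτ, ← pow_mul, ← pow_add]
    · rw [hτ, hτ, ← pow_mul, show q ^ 2 * q ^ 2 = q ^ 3 * q ^ 1 by ring, pow_mul, ← hcard,
        FiniteField.pow_card]
  refine ⟨τ, hτ, hτ2, fun x => ?_, fun x => ?_⟩
  · rw [hτ2, hτ, ← pow_mul, ← pow_add, Nat.add_sub_of_le (by omega), ← hcard,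
      FiniteField.pow_card]
  · rw [cubicNorm, hτ2, hτ]
    rcases hr with rfl | rfl
    · simp only [pow_add, pow_one]
    · simp only [pow_add, pow_one]
      ring

theorem stmt4_general (q : ℕ)
    (K : Type*) [Field K] [Fintype K] (hcard : Fintype.card K = q ^ 3)
    (ξ : K) (a : K) (hN2 : a ^ (1 + q + q ^ 2) ≠ -1)
    (r : ℕ) (hr : r = 1 ∨ r = 2) :
    let A : K → K := fun z => z ^ q ^ r - a * z ^ q ^ (3 - r)
    let g : K → K := fun x => x + a ^ q ^ (3 - r) * x ^ q ^ r
    -- the componentwise identity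
    (∀ x y : K,
      (![x, y, -a ^ (q ^ r + 1) * y, -ξ * a ^ (q ^ r + 1) * x] +
        ![a ^ q ^ (3 - r) * x ^ q ^ r, a ^ q ^ (3 - r) * y ^ q ^ r,
          y ^ q ^ r, ξ * x ^ q ^ r] : Fin 4 → K) =
      ![g x, g y, A (g y), ξ * A (g x)]) ∧
    -- the map g is a bijection of K
    Function.Bijective g ∧
    -- hence L_{D_A} = { <u + f(u)> : u in the plane of t1, u ≠ 0 }
    ({S : Submodule K (Fin 4 → K) | ∃ z w : K, ¬ (z = 0 ∧ w = 0) ∧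
        S = Submodule.span K {![z, w, A w, ξ * A z]}} =
     {S : Submodule K (Fin 4 → K) | ∃ x y : K, ¬ (x = 0 ∧ y = 0) ∧
        S = Submodule.span K
          {(![x, y, -a ^ (q ^ r + 1) * y, -ξ * a ^ (q ^ r + 1) * x] +
            ![a ^ q ^ (3 - r) * x ^ q ^ r, a ^ q ^ (3 - r) * y ^ q ^ r,
              y ^ q ^ r, ξ * x ^ q ^ r] : Fin 4 → K)}}) := by
  intro A g
  obtain ⟨τ, hτ, hτ2, hτ3, hN⟩ := exists_ringHom_pow_pow_of_card_eq_pow_three hcard hr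
  have hg : ∀ x, g x = x + τ (τ a) * τ x := fun x => by rw [hτ2, hτ]
  have hAg : ∀ x, A (g x) = x ^ q ^ r - a ^ (q ^ r + 1) * x := fun x => by
    rw [show A (g x) = τ (g x) - a * τ (τ (g x)) by rw [hτ2, hτ], hg,
      apply_add_mul_apply_sub_mul hτ3, hτ, hτ, pow_succ]
    ring
  have hid : ∀ x y : K,
      (![x, y, -a ^ (q ^ r + 1) * y, -ξ * a ^ (q ^ r + 1) * x] +
        ![a ^ q ^ (3 - r) * x ^ q ^ r, a ^ q ^ (3 - r) * y ^ q ^ r,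
          y ^ q ^ r, ξ * x ^ q ^ r] : Fin 4 → K) =
      ![g x, g y, A (g y), ξ * A (g x)] := by
    intro x y
    simp only [Matrix.cons_add_cons, Matrix.empty_add_empty, hAg, g]
    ring_nf
  have hbij : Function.Bijective g := by
    rw [show g = fun x => x + τ (τ a) * τ x from funext hg]
    refine Finite.injective_iff_bijective.mp (injective_add_mul_apply hτ3 ?_)
    rwa [cubicNorm_apply hτ3, cubicNorm_apply hτ3, hN]
  refine ⟨hid, hbij, ?_⟩
  simp only [hid]
  exact setOf_exists_ne_zero_comp_bijective hbij (by simp [hg])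
    fun z w => Submodule.span K {![z, w, A w, ξ * A z]}

/-- the identity defining the semilinear map `f` between the
transversals, bijectivity of `x ↦ x + a^{q^{3-r}} x^{q^r}`, and the resulting
description of the linear set `L_{D_A}`. -/
theorem stmt4 (q : ℕ) (hq : IsPrimePow q) (hodd : Odd q)
    (K : Type*) [Field K] [Fintype K] (hcard : Fintype.card K = q ^ 3)
    (ξ : K) (hξq : ξ ^ q = ξ) (hξns : ¬ ∃ c : K, c ^ q = c ∧ c ^ 2 = ξ)
    (a : K) (ha : a ≠ 0)
    (hN1 : a ^ (1 + q + q ^ 2) ≠ 1) (hN2 : a ^ (1 + q + q ^ 2) ≠ -1)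
    (r : ℕ) (hr : r = 1 ∨ r = 2) :
    let A : K → K := fun z => z ^ q ^ r - a * z ^ q ^ (3 - r)
    let g : K → K := fun x => x + a ^ q ^ (3 - r) * x ^ q ^ r
    -- the componentwise identity
    (∀ x y : K,
      (![x, y, -a ^ (q ^ r + 1) * y, -ξ * a ^ (q ^ r + 1) * x] +
        ![a ^ q ^ (3 - r) * x ^ q ^ r, a ^ q ^ (3 - r) * y ^ q ^ r,
          y ^ q ^ r, ξ * x ^ q ^ r] : Fin 4 → K) =
      ![g x, g y, A (g y), ξ * A (g x)]) ∧
    -- the map g is a bijection of K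
    Function.Bijective g ∧
    -- hence L_{D_A} = { <u + f(u)> : u in the plane of t1, u ≠ 0 }
    ({S : Submodule K (Fin 4 → K) | ∃ z w : K, ¬ (z = 0 ∧ w = 0) ∧
        S = Submodule.span K {![z, w, A w, ξ * A z]}} =
     {S : Submodule K (Fin 4 → K) | ∃ x y : K, ¬ (x = 0 ∧ y = 0) ∧
        S = Submodule.span K
          {(![x, y, -a ^ (q ^ r + 1) * y, -ξ * a ^ (q ^ r + 1) * x] +
            ![a ^ q ^ (3 - r) * x ^ q ^ r, a ^ q ^ (3 - r) * y ^ q ^ r,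
              y ^ q ^ r, ξ * x ^ q ^ r] : Fin 4 → K)}}) :=
  stmt4_general q K hcard ξ a hN2 r hr
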